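/- In the setting of the previous construction, the map sending a function f ∈ Ind_N^G(V) to ∑_{a∈A} a ⊗ f(ι(a)) is an isomorphism of G-representations Ind_N^G(V) ≅ k[A] ⊗ V (with the twisted action defined via ι and γ). -/

import Mathlib

section CliffordDefs

variable {k G V : Type*} [Field k] [Group G] [AddCommGroup V] [Module k V]

/-- The carrier of the induced representation `Ind_H^G V`: functions `f : G → V`
with `f (g * h) = ρ h⁻¹ (f g)` for `h ∈ H`. -/
def indCar (H : Subgroup G) (ρ : Representation k H V) : Submodule k (G → V) where
  carrier := {f | ∀ (g : G) (h : H), f (g * ↑h) = ρ h⁻¹ (f g)}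
  add_mem' := by
    intro f₁ f₂ h₁ h₂ g h
    simp [h₁ g h, h₂ g h]
  zero_mem' := by intro g h; simp
  smul_mem' := by
    intro c f hf g h
    simp [hf g h]

/-- The induced representation of `G` on `indCar H ρ`, given by `(g • f) x = f (g⁻¹ * x)`. -/
def indRep (H : Subgroup G) (ρ : Representation k H V) : Representation k G (indCar H ρ) where
  toFun g :=
    { toFun := fun f => ⟨fun x => (f : G → V) (g⁻¹ * x), by
        intro x h
        show (f : G → V) (g⁻¹ * (x * ↑h)) = ρ h⁻¹ ((f : G → V) (g⁻¹ * x))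
        rw [← mul_assoc]
        exact f.2 (g⁻¹ * x) h⟩
      map_add' := by intro f₁ f₂; ext x; simp
      map_smul' := by intro c f; ext x; simp }
  map_one' := by ext f x; simp
  map_mul' := by intro g₁ g₂; ext f x; simp [mul_assoc]

end CliffordDefs

/-!
Every `x ∈ G` factors uniquely as `ι (π x) * n` with `n ∈ N` (`sectionOffset`), and an
`f ∈ Ind_N^G V` satisfies `f (ι (π x) * n) = ρ n⁻¹ (f (ι (π x)))`, so `f` is determined by its
values on the section and these can be prescribed freely: `f ↦ (a ↦ f (ι a))` is a linear
isomorphism onto `A → V`. Transporting the induced action along it gives at `b` the value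
`f (x⁻¹ * ι b)`, and factoring `x⁻¹ * ι b = ι ((π x)⁻¹ * b) * n` yields the twisted action.
-/

section SectionOffset

variable {G : Type*} [Group G] {N : Subgroup G} [N.Normal] {ι : G ⧸ N → G}

lemma inv_section_mul_mul_section_mem (hι : ∀ a, QuotientGroup.mk' N (ι a) = a) (x : G)
    (b : G ⧸ N) : (ι b)⁻¹ * x * ι ((QuotientGroup.mk' N x)⁻¹ * b) ∈ N := by
  rw [← QuotientGroup.eq_one_iff, ← QuotientGroup.mk'_apply]
  simp only [map_mul, map_inv, hι]
  group

def sectionOffset (hι : ∀ a, QuotientGroup.mk' N (ι a) = a) (x : G) : N :=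
  ⟨(ι (QuotientGroup.mk' N x))⁻¹ * x, QuotientGroup.eq.mp (hι _)⟩

variable (hι : ∀ a, QuotientGroup.mk' N (ι a) = a)

lemma coe_sectionOffset (x : G) :
    (sectionOffset hι x : G) = (ι (QuotientGroup.mk' N x))⁻¹ * x := rfl

lemma section_mul_sectionOffset (x : G) :
    ι (QuotientGroup.mk' N x) * sectionOffset hι x = x := by
  simp [coe_sectionOffset]

lemma sectionOffset_mul (x : G) (h : N) :
    sectionOffset hι (x * h) = sectionOffset hι x * h := by
  ext
  simp [coe_sectionOffset, QuotientGroup.mk_mul_of_mem x h.2, mul_assoc]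

lemma sectionOffset_section (a : G ⧸ N) : sectionOffset hι (ι a) = 1 := by
  ext
  simp [coe_sectionOffset, hι]

end SectionOffset

section TwistedRep

variable {k G V : Type*} [Field k] [Group G] [AddCommGroup V] [Module k V]
  {N : Subgroup G} [N.Normal] (ρ : Representation k N V) {ι : G ⧸ N → G}
  (hι : ∀ a, QuotientGroup.mk' N (ι a) = a)

lemma sectionOffset_inv_mem_indCar (F : G ⧸ N → V) :
    (fun x => ρ (sectionOffset hι x)⁻¹ (F (QuotientGroup.mk' N x))) ∈ indCar N ρ := by
  intro g h
  have hq : QuotientGroup.mk' N (g * h) = QuotientGroup.mk' N g :=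
    QuotientGroup.mk_mul_of_mem g h.2
  simp only [hq, sectionOffset_mul, mul_inv_rev, map_mul, Module.End.mul_apply]

def indCarEquivFun : indCar N ρ ≃ₗ[k] (G ⧸ N → V) where
  toFun f a := (f : G → V) (ι a)
  invFun F := ⟨_, sectionOffset_inv_mem_indCar ρ hι F⟩
  map_add' _ _ := rfl
  map_smul' _ _ := rfl
  left_inv f := by
    ext x
    conv_rhs => rw [← section_mul_sectionOffset hι x, f.2]
  right_inv F := by
    ext a
    simp [sectionOffset_section, hι]

def twistedRep : Representation k G (G ⧸ N → V) :=
  ((indCarEquivFun ρ hι).conjAlgEquiv k).toMonoidHom.comp (indRep N ρ)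

lemma indCarEquivFun_indRep (g : G) (f : indCar N ρ) :
    indCarEquivFun ρ hι (indRep N ρ g f) = twistedRep ρ hι g (indCarEquivFun ρ hι f) := by
  simp [twistedRep]

lemma twistedRep_apply (x : G) (F : G ⧸ N → V) (b : G ⧸ N) :
    twistedRep ρ hι x F b =
      ρ ⟨_, inv_section_mul_mul_section_mem hι x b⟩ (F ((QuotientGroup.mk' N x)⁻¹ * b)) := by
  have hq : QuotientGroup.mk' N (x⁻¹ * ι b) = (QuotientGroup.mk' N x)⁻¹ * b := by
    rw [map_mul, map_inv, hι]
  have hn : (sectionOffset hι (x⁻¹ * ι b))⁻¹ = ⟨_, inv_section_mul_mul_section_mem hι x b⟩ := by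
    ext
    simp [coe_sectionOffset, hq, mul_assoc]
  change ρ (sectionOffset hι (x⁻¹ * ι b))⁻¹ (F (QuotientGroup.mk' N (x⁻¹ * ι b))) = _
  rw [hn, hq]

end TwistedRep

/-- Let `N ⊴ G` of finite index, `A = G ⧸ N`, `ι` a section of the quotient with `ι 1 = 1`.
The map sending `f ∈ Ind_N^G V` to `∑_{a ∈ A} a ⊗ f (ι a)` — realized as the function
`A → V`, `a ↦ f (ι a)` — is an isomorphism of `G`-representations from `Ind_N^G V` onto
`k[A] ⊗ V` equipped with the twisted action `ι(a)g · (f ⊗ v) = af ⊗ ρ(γ(a,f)) ρ(ι(f)⁻¹gι(f)) v`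
(whose closed form on `F : A → V` at `b` acts by `ι(b)⁻¹ x ι((π x)⁻¹ b) ∈ N` on `F((π x)⁻¹ b)`). -/
theorem ind_iso_twisted_tensor {k G V : Type*} [Field k] [Group G] [AddCommGroup V]
    [Module k V] (N : Subgroup G) [N.Normal]
    (ρ : Representation k N V)
    (ι : G ⧸ N → G) (hι : ∀ a, QuotientGroup.mk' N (ι a) = a) :
    ∃ σ : Representation k G ((G ⧸ N) → V),
      (∀ (x : G) (F : (G ⧸ N) → V) (b : G ⧸ N),
        σ x F b =
          ρ ⟨(ι b)⁻¹ * x * ι ((QuotientGroup.mk' N x)⁻¹ * b), by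
              rw [← QuotientGroup.eq_one_iff]
              show (QuotientGroup.mk' N) ((ι b)⁻¹ * x * ι ((QuotientGroup.mk' N x)⁻¹ * b)) = 1
              simp only [map_mul, map_inv, hι]
              group⟩
            (F ((QuotientGroup.mk' N x)⁻¹ * b))) ∧
      ∃ e : indCar N ρ ≃ₗ[k] ((G ⧸ N) → V),
        (∀ (f : indCar N ρ) (a : G ⧸ N), e f a = (f : G → V) (ι a)) ∧
        (∀ (g : G) (f : indCar N ρ), e (indRep N ρ g f) = σ g (e f)) :=
  ⟨twistedRep ρ hι, twistedRep_apply ρ hι, indCarEquivFun ρ hι, fun _ _ => rfl,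
    indCarEquivFun_indRep ρ hι⟩
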